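/- arXiv:1405.2181 — 15 statements merged into one kernel-verified Lean document; each statement's English description precedes it below -/
import Mathlib

section
/- Let V be a real vector space, Z : V × V → ℝ a bilinear form and θ a 1-form on V. If θ(X₁)Z(X₂,X₃) + θ(X₂)Z(X₁,X₃) = 0 for all X₁, X₂, X₃ ∈ V, then Z = 0 or θ = 0. -/
/-- Lemma 3.1(1): if `θ(X₁)Z(X₂,X₃) + θ(X₂)Z(X₁,X₃) = 0` for all vectors,
then the bilinear form `Z` vanishes or the 1-form `θ` vanishes. -/
theorem stmt_0 {V : Type*} [AddCommGroup V] [Module ℝ V]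
    (Z : V →ₗ[ℝ] V →ₗ[ℝ] ℝ) (θ : V →ₗ[ℝ] ℝ)
    (h : ∀ X₁ X₂ X₃ : V, θ X₁ * Z X₂ X₃ + θ X₂ * Z X₁ X₃ = 0) :
    Z = 0 ∨ θ = 0 := by
  by_cases hθ : θ = 0
  · exact Or.inr hθ
  · left
    obtain ⟨X, hX⟩ : ∃ X, θ X ≠ 0 := by
      by_contra hc
      push_neg at hc
      exact hθ (LinearMap.ext fun v => by simpa using hc v)
    have hZX : ∀ X₃, Z X X₃ = 0 := fun X₃ => by
      have := h X X X₃
      have h2 : (2 : ℝ) * (θ X * Z X X₃) = 0 := by ring_nf; linarith [this]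
      have := mul_eq_zero.mp h2
      rcases this with h | h
      · norm_num at h
      · exact (mul_eq_zero.mp h).resolve_left hX
    ext X₂ X₃
    have := h X X₂ X₃
    rw [hZX] at this
    simp only [mul_zero, add_zero] at this
    have := mul_eq_zero.mp this
    simpa using this.resolve_left hX
end

section
/- Let V be a real vector space, Z a symmetric bilinear form on V and θ a 1-form on V. If θ(X₁)Z(X₂,X₃) + θ(X₂)Z(X₃,X₁) + θ(X₃)Z(X₁,X₂) = 0 for all X₁, X₂, X₃ ∈ V, then Z = 0 or θ = 0. -/
/-- Lemma 3.1(2): if `Z` is symmetric and the cyclic sum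
`θ(X₁)Z(X₂,X₃) + θ(X₂)Z(X₃,X₁) + θ(X₃)Z(X₁,X₂)` vanishes, then `Z = 0` or `θ = 0`. -/
theorem stmt_1 {V : Type*} [AddCommGroup V] [Module ℝ V]
    (Z : V →ₗ[ℝ] V →ₗ[ℝ] ℝ) (θ : V →ₗ[ℝ] ℝ)
    (hZsym : ∀ X Y : V, Z X Y = Z Y X)
    (h : ∀ X₁ X₂ X₃ : V,
      θ X₁ * Z X₂ X₃ + θ X₂ * Z X₃ X₁ + θ X₃ * Z X₁ X₂ = 0) :
    Z = 0 ∨ θ = 0 := by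
  by_cases hθ : θ = 0
  · exact Or.inr hθ
  · left
    obtain ⟨X, hX⟩ : ∃ X, θ X ≠ 0 := by
      by_contra hc
      push_neg at hc
      exact hθ (LinearMap.ext fun v => by simpa using hc v)
    have hXX : Z X X = 0 := by
      have := h X X X
      have h3 : (3 : ℝ) * (θ X * Z X X) = 0 := by ring_nf; ring_nf at this; linarith
      have := mul_eq_zero.mp h3
      rcases this with h' | h'
      · norm_num at h'
      · rcases mul_eq_zero.mp h' with h'' | h''
        · exact absurd h'' hX
        · exact h''
    have hXY : ∀ Y, Z X Y = 0 := by
      intro Y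
      have := h X X Y
      rw [hZsym Y X] at this
      have h2 : (2 : ℝ) * (θ X * Z X Y) = 0 := by
        rw [hXX] at this; ring_nf at this ⊢; linarith
      rcases mul_eq_zero.mp h2 with h' | h'
      · norm_num at h'
      · rcases mul_eq_zero.mp h' with h'' | h''
        · exact absurd h'' hX
        · exact h''
    ext Y W
    have := h X Y W
    rw [hZsym W X, hXY W, hXY Y] at this
    simp only [mul_zero, add_zero, zero_add] at this
    rcases mul_eq_zero.mp this with h' | h'
    · exact absurd h' hX
    · simpa using h'
end

section
/- Let V be a real vector space, Z a symmetric bilinear form on V and θ a 1-form on V. If θ(X₁)Z(X₂,X₃) − θ(X₂)Z(X₁,X₃) = 0 for all X₁, X₂, X₃ ∈ V, then the rank of Z is at most 1 or θ = 0. -/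
/-- Lemma 3.1(3): if `Z` is symmetric and
`θ(X₁)Z(X₂,X₃) − θ(X₂)Z(X₁,X₃) = 0` for all vectors, then `rank Z ≤ 1` or `θ = 0`. -/
theorem stmt_2 {V : Type*} [AddCommGroup V] [Module ℝ V]
    (Z : V →ₗ[ℝ] V →ₗ[ℝ] ℝ) (θ : V →ₗ[ℝ] ℝ)
    (hZsym : ∀ X Y : V, Z X Y = Z Y X)
    (h : ∀ X₁ X₂ X₃ : V, θ X₁ * Z X₂ X₃ - θ X₂ * Z X₁ X₃ = 0) :
    LinearMap.rank Z ≤ 1 ∨ θ = 0 := by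
  by_cases hθ : θ = 0
  · exact Or.inr hθ
  · left
    obtain ⟨a, ha⟩ : ∃ a, θ a ≠ 0 := by
      by_contra hc
      push_neg at hc
      exact hθ (LinearMap.ext fun x => by simpa using hc x)
    have key : ∀ X : V, Z X = ((θ a)⁻¹ * θ X) • Z a := by
      intro X
      ext Y
      have := h X a Y
      have h2 : θ X * Z a Y = θ a * Z X Y := by linarith
      simp only [LinearMap.smul_apply, smul_eq_mul]
      field_simp
      linarith
    have hrange : LinearMap.range Z ≤ Submodule.span ℝ {Z a} := by
      rintro x ⟨X, rfl⟩
      rw [key X]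
      exact Submodule.smul_mem _ _ (Submodule.mem_span_singleton_self _)
    calc LinearMap.rank Z ≤ Module.rank ℝ (Submodule.span ℝ {Z a}) :=
          Submodule.rank_mono hrange
      _ ≤ 1 := by simpa using rank_span_le ({Z a} : Set (V →ₗ[ℝ] ℝ))
end

section
/- Let V be a real vector space, Z a symmetric bilinear form on V, and D : V × V × V → ℝ a trilinear map satisfying D(X,X₁,X₂) = D(X,X₂,X₁) for all X, X₁, X₂ ∈ V. Suppose there are 1-forms δ, η, λ on V with D(X,X₁,X₂) = δ(X)Z(X₁,X₂) + η(X₁)Z(X,X₂) + λ(X₂)Z(X₁,X) for all X, X₁, X₂ ∈ V. Then, with ν = (η+λ)/2, one also has D(X,X₁,X₂) = δ(X)Z(X₁,X₂) + ν(X₁)Z(X,X₂) + ν(X₂)Z(X₁,X) for all X, X₁, X₂ ∈ V. -/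
/-- Theorem 3.1(1)(i): a weakly `Z`-symmetric solution `(δ, η, λ)` with `Z` symmetric
yields the solution `(δ, ν, ν)` with `ν = (η+λ)/2`. -/
theorem stmt_3 {V : Type*} [AddCommGroup V] [Module ℝ V]
    (Z : V →ₗ[ℝ] V →ₗ[ℝ] ℝ)
    (D : V →ₗ[ℝ] V →ₗ[ℝ] V →ₗ[ℝ] ℝ)
    (δ η lam : V →ₗ[ℝ] ℝ)
    (hZsym : ∀ X Y : V, Z X Y = Z Y X)
    (hDsym : ∀ X X₁ X₂ : V, D X X₁ X₂ = D X X₂ X₁)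
    (hdec : ∀ X X₁ X₂ : V,
      D X X₁ X₂ = δ X * Z X₁ X₂ + η X₁ * Z X X₂ + lam X₂ * Z X₁ X) :
    ∀ X X₁ X₂ : V,
      D X X₁ X₂ = δ X * Z X₁ X₂ + ((η X₁ + lam X₁) / 2) * Z X X₂
        + ((η X₂ + lam X₂) / 2) * Z X₁ X := by
  intro X X₁ X₂
  have h1 := hdec X X₁ X₂
  have h2 := hdec X X₂ X₁
  have h3 := hDsym X X₁ X₂
  have e1 := hZsym X₁ X₂
  have e2 := hZsym X X₂
  have e3 := hZsym X₁ X
  linear_combination h1/2 + h2/2 + h3/2 - δ X/2 * e1 - lam X₁/2 * e2 - η X₂/2 * e3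
end

section
/- Let V be a real vector space, Z a symmetric bilinear form on V of rank at least 2, and D : V × V × V → ℝ a trilinear map satisfying D(X,X₁,X₂) = D(X,X₂,X₁) for all X, X₁, X₂ ∈ V. Suppose there are 1-forms δ, η, λ on V with D(X,X₁,X₂) = δ(X)Z(X₁,X₂) + η(X₁)Z(X,X₂) + λ(X₂)Z(X₁,X) for all X, X₁, X₂ ∈ V. Then η = λ. -/
/-- Theorem 3.1(1)(ii): a weakly `Z`-symmetric solution `(δ, η, λ)` with `Z`
symmetric of rank `> 1` satisfies `η = λ`. -/
theorem stmt_4 {V : Type*} [AddCommGroup V] [Module ℝ V]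
    (Z : V →ₗ[ℝ] V →ₗ[ℝ] ℝ)
    (D : V →ₗ[ℝ] V →ₗ[ℝ] V →ₗ[ℝ] ℝ)
    (δ η lam : V →ₗ[ℝ] ℝ)
    (hZsym : ∀ X Y : V, Z X Y = Z Y X)
    (hrank : 2 ≤ LinearMap.rank Z)
    (hDsym : ∀ X X₁ X₂ : V, D X X₁ X₂ = D X X₂ X₁)
    (hdec : ∀ X X₁ X₂ : V,
      D X X₁ X₂ = δ X * Z X₁ X₂ + η X₁ * Z X X₂ + lam X₂ * Z X₁ X) :
    η = lam := by
  -- key identity: (η X₁ - lam X₁) * Z X X₂ = (η X₂ - lam X₂) * Z X X₁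
  have key : ∀ X X₁ X₂ : V,
      (η X₁ - lam X₁) * Z X X₂ = (η X₂ - lam X₂) * Z X X₁ := by
    intro X X₁ X₂
    have h := hDsym X X₁ X₂
    rw [hdec X X₁ X₂, hdec X X₂ X₁, hZsym X₁ X₂, hZsym X₁ X, hZsym X₂ X] at h
    ring_nf
    ring_nf at h
    linarith
  by_contra hne
  obtain ⟨x₂, hx₂⟩ : ∃ x₂, η x₂ - lam x₂ ≠ 0 := by
    by_contra hall
    push_neg at hall
    exact hne (LinearMap.ext fun x => by have := hall x; linarith)
  set c : V →ₗ[ℝ] ℝ := (η x₂ - lam x₂)⁻¹ • (η - lam) with hc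
  have hrange : LinearMap.range Z ≤ Submodule.span ℝ {c} := by
    rintro f ⟨X, rfl⟩
    have : Z X = (Z X x₂) • c := by
      ext X₁
      have k := key X X₁ x₂
      simp only [hc, LinearMap.smul_apply, LinearMap.sub_apply, smul_eq_mul]
      field_simp
      linarith [k]
    rw [this]
    exact Submodule.smul_mem _ _ (Submodule.mem_span_singleton_self c)
  have h1 : LinearMap.rank Z ≤ 1 := by
    calc LinearMap.rank Z = Module.rank ℝ (LinearMap.range Z) := rfl
      _ ≤ Module.rank ℝ (Submodule.span ℝ {c}) := Submodule.rank_mono hrange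
      _ ≤ 1 := by simpa using rank_span_le ({c} : Set (V →ₗ[ℝ] ℝ))
  exact absurd (le_trans hrank h1) (by norm_num)
end

section
/- Let V be a real vector space, Z a nonzero skew-symmetric bilinear form on V, and D : V × V × V → ℝ a trilinear map satisfying D(X,X₁,X₂) = −D(X,X₂,X₁) for all X, X₁, X₂ ∈ V. Suppose there are 1-forms δ, η, λ on V with D(X,X₁,X₂) = δ(X)Z(X₁,X₂) + η(X₁)Z(X,X₂) + λ(X₂)Z(X₁,X) for all X, X₁, X₂ ∈ V. Then η = λ. -/
/-- Theorem 3.1(2): a weakly `Z`-symmetric solution `(δ, η, λ)` with `Z`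
nonzero and skew-symmetric satisfies `η = λ`. -/
theorem stmt_5 {V : Type*} [AddCommGroup V] [Module ℝ V]
    (Z : V →ₗ[ℝ] V →ₗ[ℝ] ℝ)
    (D : V →ₗ[ℝ] V →ₗ[ℝ] V →ₗ[ℝ] ℝ)
    (δ η lam : V →ₗ[ℝ] ℝ)
    (hZ : Z ≠ 0)
    (hZskew : ∀ X Y : V, Z X Y = - Z Y X)
    (hDskew : ∀ X X₁ X₂ : V, D X X₁ X₂ = - D X X₂ X₁)
    (hdec : ∀ X X₁ X₂ : V,
      D X X₁ X₂ = δ X * Z X₁ X₂ + η X₁ * Z X X₂ + lam X₂ * Z X₁ X) :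
    η = lam := by
  have key : ∀ X X₁ X₂ : V,
      (η X₁ - lam X₁) * Z X X₂ + (η X₂ - lam X₂) * Z X X₁ = 0 := by
    intro X X₁ X₂
    have h := hDskew X X₁ X₂
    rw [hdec X X₁ X₂, hdec X X₂ X₁] at h
    have h1 := hZskew X₁ X₂
    have h2 := hZskew X₁ X
    have h3 := hZskew X₂ X
    linear_combination h - δ X * h1 - lam X₂ * h2 - lam X₁ * h3
  have diag : ∀ X Y : V, (η Y - lam Y) * Z X Y = 0 := by
    intro X Y
    have := key X Y Y
    linarith
  ext Y
  by_contra hne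
  have hμ : η Y - lam Y ≠ 0 := sub_ne_zero.mpr hne
  apply hZ
  ext X X₂
  have h1 := key X Y X₂
  have h2 := diag X Y
  have h3 := diag X X₂
  simp only [LinearMap.zero_apply]
  have : (η Y - lam Y) * Z X X₂ = 0 := by nlinarith
  exact (mul_eq_zero.mp this).resolve_left hμ
end

section
/- Let V be a real vector space, Z a symmetric bilinear form on V of rank at least 2, and D : V × V × V → ℝ a trilinear map satisfying D(X,X₁,X₂) = D(X,X₂,X₁) and D(X,X₁,X₂) = D(X₁,X,X₂) for all X, X₁, X₂ ∈ V (the latter is the Codazzi condition). Suppose there are 1-forms δ, η, λ on V with D(X,X₁,X₂) = δ(X)Z(X₁,X₂) + η(X₁)Z(X,X₂) + λ(X₂)Z(X₁,X) for all X, X₁, X₂ ∈ V. Then δ = η = λ. -/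
lemma aux_rank2 {V : Type*} [AddCommGroup V] [Module ℝ V]
    (Z : V →ₗ[ℝ] V →ₗ[ℝ] ℝ)
    (hrank : 2 ≤ LinearMap.rank Z)
    (μ : V →ₗ[ℝ] ℝ)
    (h : ∀ X Y W : V, μ X * Z Y W = μ Y * Z X W) : μ = 0 := by
  by_contra hμ
  obtain ⟨X₀, hX₀⟩ : ∃ X, μ X ≠ 0 := by
    by_contra h'
    push_neg at h'
    exact hμ (LinearMap.ext fun x => h' x)
  have hZ : ∀ Y, Z Y = (μ Y / μ X₀) • Z X₀ := by
    intro Y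
    ext W
    simp only [LinearMap.smul_apply, smul_eq_mul]
    have := h Y X₀ W
    field_simp
    linarith
  have hrange : LinearMap.range Z ≤ Submodule.span ℝ {Z X₀} := by
    rintro _ ⟨Y, rfl⟩
    rw [hZ Y]
    exact Submodule.smul_mem _ _ (Submodule.mem_span_singleton_self _)
  have hle : LinearMap.rank Z ≤ 1 := by
    calc LinearMap.rank Z ≤ Module.rank ℝ (Submodule.span ℝ ({Z X₀} : Set (V →ₗ[ℝ] ℝ))) :=
          Submodule.rank_mono hrange
      _ ≤ Cardinal.mk ({Z X₀} : Set (V →ₗ[ℝ] ℝ)) := rank_span_le _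
      _ = 1 := Cardinal.mk_singleton _
  have : (2 : Cardinal) ≤ 1 := hrank.trans hle
  norm_num at this

/-- Theorem 3.1(3): a weakly `Z`-symmetric solution `(δ, η, λ)` with `Z`
symmetric of Codazzi type and rank `> 1` satisfies `δ = η = λ`. -/
theorem stmt_6 {V : Type*} [AddCommGroup V] [Module ℝ V]
    (Z : V →ₗ[ℝ] V →ₗ[ℝ] ℝ)
    (D : V →ₗ[ℝ] V →ₗ[ℝ] V →ₗ[ℝ] ℝ)
    (δ η lam : V →ₗ[ℝ] ℝ)
    (hZsym : ∀ X Y : V, Z X Y = Z Y X)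
    (hrank : 2 ≤ LinearMap.rank Z)
    (hDsym : ∀ X X₁ X₂ : V, D X X₁ X₂ = D X X₂ X₁)
    (hCodazzi : ∀ X X₁ X₂ : V, D X X₁ X₂ = D X₁ X X₂)
    (hdec : ∀ X X₁ X₂ : V,
      D X X₁ X₂ = δ X * Z X₁ X₂ + η X₁ * Z X X₂ + lam X₂ * Z X₁ X) :
    δ = η ∧ η = lam := by
  have h1 : δ - η = 0 := by
    apply aux_rank2 Z hrank
    intro X Y W
    have hc := hCodazzi X Y W
    rw [hdec X Y W, hdec Y X W] at hc
    rw [hZsym Y X] at hc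
    simp only [LinearMap.sub_apply]
    linarith
  have h2 : η - lam = 0 := by
    apply aux_rank2 Z hrank
    intro X Y W
    have hc := hDsym W X Y
    rw [hdec W X Y, hdec W Y X] at hc
    rw [hZsym X Y, hZsym W Y, hZsym W X] at hc
    simp only [LinearMap.sub_apply]
    linarith
  exact ⟨sub_eq_zero.mp h1, sub_eq_zero.mp h2⟩
end

section
/- Let V be a real vector space, Z a nonzero symmetric bilinear form on V, and D : V × V × V → ℝ a trilinear map satisfying D(X,X₁,X₂) = D(X,X₂,X₁) for all X, X₁, X₂ ∈ V and the cyclic parallel condition D(X,X₁,X₂) + D(X₁,X₂,X) + D(X₂,X,X₁) = 0 for all X, X₁, X₂ ∈ V. Suppose there are 1-forms δ, η, λ on V with D(X,X₁,X₂) = δ(X)Z(X₁,X₂) + η(X₁)Z(X,X₂) + λ(X₂)Z(X₁,X) for all X, X₁, X₂ ∈ V. Then δ + η + λ = 0, and moreover, with ζ = −(η+λ)/2, one has D(X,X₁,X₂) = 2ζ(X)Z(X₁,X₂) − ζ(X₁)Z(X,X₂) − ζ(X₂)Z(X₁,X) for all X, X₁, X₂ ∈ V. -/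
/-- Theorem 3.1(4): a weakly `Z`-symmetric solution `(δ, η, λ)` with `Z`
nonzero, symmetric and cyclic parallel satisfies `δ + η + λ = 0` and yields the
solution `(2ζ, −ζ, −ζ)` with `ζ = (η+λ)/2` (i.e. with `ζ' = −(η+λ)/2` here). -/
theorem stmt_7 {V : Type*} [AddCommGroup V] [Module ℝ V]
    (Z : V →ₗ[ℝ] V →ₗ[ℝ] ℝ)
    (D : V →ₗ[ℝ] V →ₗ[ℝ] V →ₗ[ℝ] ℝ)
    (δ η lam : V →ₗ[ℝ] ℝ)
    (hZ : Z ≠ 0)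
    (hZsym : ∀ X Y : V, Z X Y = Z Y X)
    (hDsym : ∀ X X₁ X₂ : V, D X X₁ X₂ = D X X₂ X₁)
    (hcyc : ∀ X X₁ X₂ : V, D X X₁ X₂ + D X₁ X₂ X + D X₂ X X₁ = 0)
    (hdec : ∀ X X₁ X₂ : V,
      D X X₁ X₂ = δ X * Z X₁ X₂ + η X₁ * Z X X₂ + lam X₂ * Z X₁ X) :
    δ + η + lam = 0 ∧
      ∀ X X₁ X₂ : V,
        D X X₁ X₂ = 2 * (-(η X + lam X) / 2) * Z X₁ X₂
          - (-(η X₁ + lam X₁) / 2) * Z X X₂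
          - (-(η X₂ + lam X₂) / 2) * Z X₁ X := by
  -- find a, b with Z a b ≠ 0
  obtain ⟨a, b, hab⟩ : ∃ a b, Z a b ≠ 0 := by
    by_contra h
    push_neg at h
    apply hZ
    ext a b
    simp [h]
  -- cyclic relation for μ = δ + η + lam
  have C : ∀ X X₁ X₂ : V,
      (δ X + η X + lam X) * Z X₁ X₂ + (δ X₁ + η X₁ + lam X₁) * Z X X₂
        + (δ X₂ + η X₂ + lam X₂) * Z X X₁ = 0 := by
    intro X X₁ X₂
    have hc := hcyc X X₁ X₂
    rw [hdec X X₁ X₂, hdec X₁ X₂ X, hdec X₂ X X₁] at hc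
    rw [hZsym X₂ X, hZsym X₂ X₁, hZsym X₁ X] at hc
    linear_combination hc
  -- symmetric relation from hDsym
  have S : ∀ X X₁ X₂ : V,
      η X₁ * Z X X₂ + lam X₂ * Z X₁ X = η X₂ * Z X X₁ + lam X₁ * Z X₂ X := by
    intro X X₁ X₂
    have hs := hDsym X X₁ X₂
    rw [hdec X X₁ X₂, hdec X X₂ X₁] at hs
    linear_combination hs + δ X * (hZsym X₂ X₁)
  have key : ∀ v : V, δ v + η v + lam v = 0 := by
    have haa : (δ a + η a + lam a) * Z a a = 0 := by
      have := C a a a; linarith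
    have hbb : (δ b + η b + lam b) * Z b b = 0 := by
      have := C b b b; linarith
    have ha : δ a + η a + lam a = 0 := by
      have h1 := C a a b
      have h2 : (δ a + η a + lam a) ^ 2 * Z a b = 0 := by
        linear_combination ((δ a + η a + lam a) / 2) * h1 - ((δ b + η b + lam b) / 2) * haa
      have := mul_eq_zero.mp h2
      rcases this with h | h
      · exact pow_eq_zero_iff (by norm_num) |>.mp h
      · exact absurd h hab
    have hb : δ b + η b + lam b = 0 := by
      have h1 := C b b a
      have hba : Z b a ≠ 0 := by rw [hZsym b a]; exact hab
      have h2 : (δ b + η b + lam b) ^ 2 * Z b a = 0 := by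
        linear_combination ((δ b + η b + lam b) / 2) * h1 - ((δ a + η a + lam a) / 2) * hbb
      rcases mul_eq_zero.mp h2 with h | h
      · exact pow_eq_zero_iff (by norm_num) |>.mp h
      · exact absurd h hba
    intro v
    have h1 := C v a b
    rw [ha, hb] at h1
    have h2 : (δ v + η v + lam v) * Z a b = 0 := by linarith
    rcases mul_eq_zero.mp h2 with h | h
    · exact h
    · exact absurd h hab
  constructor
  · ext v
    simpa using key v
  · intro X X₁ X₂
    have hδ : δ X = -(η X + lam X) := by have := key X; linarith
    rw [hdec X X₁ X₂, hδ]
    have hs := S X X₁ X₂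
    linear_combination hs / 2 + (lam X₁ / 2) * (hZsym X₂ X)
      + (η X₂ / 2 - lam X₂ / 2) * (hZsym X₁ X) + (η X₂ - lam X₂ / 2) * (hZsym X X₁)
end

section
/- Let V be a real vector space, k ≥ 2, and i ≠ j in {1,…,k}. Let T : V^k → ℝ be a nonzero k-linear map that is skew-symmetric in its i-th and j-th arguments (interchanging the i-th and j-th arguments changes the sign of T), and let D : V^(k+1) → ℝ be a (k+1)-linear map that is skew-symmetric in its (i+1)-st and (j+1)-st arguments. Suppose there are 1-forms α, π₁, …, π_k on V such that D(X,X₁,…,X_k) = α(X)·T(X₁,…,X_k) + Σ_{p=1}^{k} π_p(X_p)·T(X₁,…,X_{p−1},X,X_{p+1},…,X_k) for all X, X₁, …, X_k ∈ V. Then π_i = π_j. -/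
/-- Theorem 3.2: if a nonzero `(0,k)`-tensor `T` is skew-symmetric in its `i`-th and
`j`-th arguments, and the weakly `T`-symmetric (type II) decomposition holds with
1-forms `α, π₁, …, π_k` (where `D` plays the role of `∇T` and is skew-symmetric in
the corresponding arguments), then `π_i = π_j`. -/
theorem stmt_8 {V : Type*} [AddCommGroup V] [Module ℝ V]
    (k : ℕ) (hk : 2 ≤ k) (i j : Fin k) (hij : i ≠ j)
    (T : MultilinearMap ℝ (fun _ : Fin k => V) ℝ) (hT : T ≠ 0)
    (hTskew : ∀ v : Fin k → V, T (v ∘ Equiv.swap i j) = - T v)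
    (D : V →ₗ[ℝ] MultilinearMap ℝ (fun _ : Fin k => V) ℝ)
    (hDskew : ∀ (X : V) (v : Fin k → V), D X (v ∘ Equiv.swap i j) = - D X v)
    (α : V →ₗ[ℝ] ℝ) (π : Fin k → (V →ₗ[ℝ] ℝ))
    (hdec : ∀ (X : V) (v : Fin k → V),
      D X v = α X * T v + ∑ p : Fin k, π p (v p) * T (Function.update v p X)) :
    π i = π j := by
  obtain ⟨w, hw⟩ : ∃ w, T w ≠ 0 := by
    by_contra h
    push_neg at h
    exact hT (MultilinearMap.ext fun v => by simp [h v])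
  have key : ∀ Y : V, (π i Y - π j Y) * T (Function.update w j Y) = 0 := by
    intro Y
    set v : Fin k → V := Function.update (Function.update w i Y) j Y with hv
    have hvi : v i = Y := by
      simp [hv, Function.update_apply, hij]
    have hvj : v j = Y := by simp [hv]
    have hfix : ∀ (u : Fin k → V), u i = u j → u ∘ Equiv.swap i j = u := by
      intro u hu
      funext p
      rcases eq_or_ne p i with rfl | hpi
      · simp [Equiv.swap_apply_left, hu]
      rcases eq_or_ne p j with rfl | hpj
      · simp [Equiv.swap_apply_right, hu]
      · simp [Equiv.swap_apply_of_ne_of_ne hpi hpj]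
    have hTfix : ∀ (u : Fin k → V), u i = u j → T u = 0 := by
      intro u hu
      have := hTskew u
      rw [hfix u hu] at this
      linarith
    have hTv : T v = 0 := hTfix v (by rw [hvi, hvj])
    have hDv : D (w i) v = 0 := by
      have := hDskew (w i) v
      rw [hfix v (by rw [hvi, hvj])] at this
      linarith
    have hsum := hdec (w i) v
    rw [hDv, hTv, mul_zero, zero_add] at hsum
    -- terms with p ∉ {i,j} vanish
    have hzero : ∀ p ∈ Finset.univ, p ∉ ({i, j} : Finset (Fin k)) →
        π p (v p) * T (Function.update v p (w i)) = 0 := by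
      intro p _ hp
      simp only [Finset.mem_insert, Finset.mem_singleton, not_or] at hp
      have : T (Function.update v p (w i)) = 0 := by
        apply hTfix
        rw [Function.update_apply, Function.update_apply, if_neg (Ne.symm hp.1),
          if_neg (Ne.symm hp.2), hvi, hvj]
      rw [this, mul_zero]
    have hsum2 : (0 : ℝ) = ∑ p ∈ ({i, j} : Finset (Fin k)),
        π p (v p) * T (Function.update v p (w i)) := by
      exact hsum.trans (Finset.sum_subset (Finset.subset_univ _) hzero).symm
    rw [Finset.sum_pair hij] at hsum2
    have hui : Function.update v i (w i) = Function.update w j Y := by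
      funext p
      rcases eq_or_ne p i with rfl | hpi
      · rw [Function.update_self, Function.update_of_ne hij]
      rcases eq_or_ne p j with rfl | hpj
      · rw [Function.update_of_ne hpi, hvj, Function.update_self]
      · rw [Function.update_of_ne hpi, Function.update_of_ne hpj, hv,
          Function.update_of_ne hpj, Function.update_of_ne hpi]
    have huj : Function.update v j (w i) = (Function.update w j Y) ∘ Equiv.swap i j := by
      funext p
      rcases eq_or_ne p i with rfl | hpi
      · rw [Function.update_of_ne hij, hvi, Function.comp_apply,
          Equiv.swap_apply_left, Function.update_self]
      rcases eq_or_ne p j with rfl | hpj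
      · rw [Function.update_self, Function.comp_apply, Equiv.swap_apply_right,
          Function.update_of_ne hij]
      · rw [Function.update_of_ne hpj, Function.comp_apply,
          Equiv.swap_apply_of_ne_of_ne hpi hpj, Function.update_of_ne hpj, hv,
          Function.update_of_ne hpj, Function.update_of_ne hpi]
    rw [hui, huj, hTskew, hvi, hvj] at hsum2
    linarith [hsum2]
  have hd : ∀ Y : V, π i Y - π j Y = 0 := by
    have hwj : π i (w j) - π j (w j) = 0 := by
      have := key (w j)
      rw [Function.update_eq_self] at this
      exact (mul_eq_zero.mp this).resolve_right hw
    intro Y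
    have h2 := key (Y + w j)
    have hTadd : T (Function.update w j (Y + w j)) =
        T (Function.update w j Y) + T w := by
      rw [T.map_update_add, Function.update_eq_self]
    rw [map_add, map_add, hTadd] at h2
    have h1 := key Y
    have : (π i Y - π j Y) * T w = 0 := by
      linear_combination h2 - h1 - (T (Function.update w j Y) + T w) * hwj
    exact (mul_eq_zero.mp this).resolve_right hw
  ext Y
  have := hd Y
  linarith
end

section
/- Let V be a real vector space, k ≥ 2, T : V^k → ℝ a k-linear map, and σ an involutive permutation of {1,…,k} (σ∘σ = id) such that T(X_{σ(1)},…,X_{σ(k)}) = T(X₁,…,X_k) for all X₁,…,X_k ∈ V. Let D : V^(k+1) → ℝ be a (k+1)-linear map with D(X,X_{σ(1)},…,X_{σ(k)}) = D(X,X₁,…,X_k) for all X, X₁, …, X_k ∈ V, and suppose there are 1-forms α, π₁, …, π_k on V with D(X,X₁,…,X_k) = α(X)·T(X₁,…,X_k) + Σ_{p=1}^{k} π_p(X_p)·T(X₁,…,X_{p−1},X,X_{p+1},…,X_k) for all arguments. Then the same decomposition holds with each π_p replaced by π′_p = (π_p + π_{σ(p)})/2, i.e. D(X,X₁,…,X_k)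 = α(X)·T(X₁,…,X_k) + Σ_{p=1}^{k} π′_p(X_p)·T(X₁,…,X_{p−1},X,X_{p+1},…,X_k) for all arguments. -/
/-- Theorem 3.3: if a `(0,k)`-tensor `T` is invariant under an involutive permutation
`σ` of its arguments, `D` (playing the role of `∇T`) inherits this invariance, and the
weakly `T`-symmetric (type II) decomposition holds with 1-forms `α, π₁, …, π_k`, then
the decomposition also holds with each `π_p` replaced by `(π_p + π_{σ(p)})/2`. -/
theorem stmt_9 {V : Type*} [AddCommGroup V] [Module ℝ V]
    (k : ℕ) (hk : 2 ≤ k) (σ : Equiv.Perm (Fin k)) (hσ : ∀ p, σ (σ p) = p)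
    (T : MultilinearMap ℝ (fun _ : Fin k => V) ℝ)
    (hTσ : ∀ v : Fin k → V, T (v ∘ σ) = T v)
    (D : V →ₗ[ℝ] MultilinearMap ℝ (fun _ : Fin k => V) ℝ)
    (hDσ : ∀ (X : V) (v : Fin k → V), D X (v ∘ σ) = D X v)
    (α : V →ₗ[ℝ] ℝ) (π : Fin k → (V →ₗ[ℝ] ℝ))
    (hdec : ∀ (X : V) (v : Fin k → V),
      D X v = α X * T v + ∑ p : Fin k, π p (v p) * T (Function.update v p X)) :
    ∀ (X : V) (v : Fin k → V),
      D X v = α X * T v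
        + ∑ p : Fin k, ((π p (v p) + π (σ p) (v p)) / 2) * T (Function.update v p X) := by
  intro X v
  have h1 := hdec X v
  have h2 := hdec X (v ∘ σ)
  rw [hDσ, hTσ] at h2
  have key : ∀ p : Fin k, Function.update (v ∘ σ) p X = (Function.update v (σ p) X) ∘ σ := by
    intro p
    funext j
    by_cases h : j = p
    · subst h; simp
    · have hne : σ j ≠ σ p := fun hc => h (σ.injective hc)
      simp [Function.update_of_ne h, Function.comp, Function.update_of_ne hne]
  have h2' : D X v = α X * T v + ∑ p : Fin k, π p (v (σ p)) * T (Function.update v (σ p) X) := by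
    rw [h2]
    congr 1
    refine Finset.sum_congr rfl fun p _ => ?_
    rw [key, hTσ]
    rfl
  have h2'' : D X v = α X * T v + ∑ p : Fin k, π (σ p) (v p) * T (Function.update v p X) := by
    rw [h2']
    congr 1
    rw [← Equiv.sum_comp σ (fun p => π (σ p) (v p) * T (Function.update v p X))]
    refine Finset.sum_congr rfl fun p _ => ?_
    rw [hσ]
  have hS : ∑ p : Fin k, ((π p (v p) + π (σ p) (v p)) / 2) * T (Function.update v p X)
      = (∑ p : Fin k, π p (v p) * T (Function.update v p X)
        + ∑ p : Fin k, π (σ p) (v p) * T (Function.update v p X)) / 2 := by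
    rw [← Finset.sum_add_distrib, Finset.sum_div]
    refine Finset.sum_congr rfl fun p _ => ?_
    ring
  linarith [h1, h2'', hS]
end

section
/- Let V be a real vector space, B a nonzero generalized curvature tensor on V, and D : V⁵ → ℝ a 5-linear map such that for every fixed X ∈ V the 4-linear map (X₁,X₂,X₃,X₄) ↦ D(X,X₁,X₂,X₃,X₄) is a generalized curvature tensor on V. Suppose there are 1-forms α, β, β̄, γ, γ̄ on V such that D(X,X₁,X₂,X₃,X₄) = α(X)B(X₁,X₂,X₃,X₄) + β(X₁)B(X,X₂,X₃,X₄) + β̄(X₂)B(X₁,X,X₃,X₄) + γ(X₃)B(X₁,X₂,X,X₄) + γ̄(X₄)B(X₁,X₂,X₃,X) for all X, X₁, X₂, X₃, X₄ ∈ V. Then β = β̄ and γ = γ̄. -/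
/-- Prvanović's reduction (Section 3): for a nonzero generalized curvature tensor `B`
and `D` (playing the role of `∇B`) whose values are generalized curvature tensors,
a weakly `B`-symmetric solution `(α, β, β̄, γ, γ̄)` satisfies `β = β̄` and `γ = γ̄`. -/
theorem stmt_10 {V : Type*} [AddCommGroup V] [Module ℝ V]
    (B : V →ₗ[ℝ] V →ₗ[ℝ] V →ₗ[ℝ] V →ₗ[ℝ] ℝ) (hB : B ≠ 0)
    (hBskew : ∀ X₁ X₂ X₃ X₄ : V, B X₁ X₂ X₃ X₄ = - B X₂ X₁ X₃ X₄)
    (hBpair : ∀ X₁ X₂ X₃ X₄ : V, B X₁ X₂ X₃ X₄ = B X₃ X₄ X₁ X₂)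
    (hBbianchi : ∀ X₁ X₂ X₃ X₄ : V,
      B X₁ X₂ X₃ X₄ + B X₂ X₃ X₁ X₄ + B X₃ X₁ X₂ X₄ = 0)
    (D : V →ₗ[ℝ] V →ₗ[ℝ] V →ₗ[ℝ] V →ₗ[ℝ] V →ₗ[ℝ] ℝ)
    (hDskew : ∀ X X₁ X₂ X₃ X₄ : V, D X X₁ X₂ X₃ X₄ = - D X X₂ X₁ X₃ X₄)
    (hDpair : ∀ X X₁ X₂ X₃ X₄ : V, D X X₁ X₂ X₃ X₄ = D X X₃ X₄ X₁ X₂)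
    (hDbianchi : ∀ X X₁ X₂ X₃ X₄ : V,
      D X X₁ X₂ X₃ X₄ + D X X₂ X₃ X₁ X₄ + D X X₃ X₁ X₂ X₄ = 0)
    (α β β' γ γ' : V →ₗ[ℝ] ℝ)
    (hdec : ∀ X X₁ X₂ X₃ X₄ : V,
      D X X₁ X₂ X₃ X₄ = α X * B X₁ X₂ X₃ X₄
        + β X₁ * B X X₂ X₃ X₄ + β' X₂ * B X₁ X X₃ X₄
        + γ X₃ * B X₁ X₂ X X₄ + γ' X₄ * B X₁ X₂ X₃ X) :
    β = β' ∧ γ = γ' := by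
  -- find a point where B is nonzero
  obtain ⟨a, b, c, d, habcd⟩ : ∃ a b c d : V, B a b c d ≠ 0 := by
    by_contra h
    push_neg at h
    exact hB (by ext a b c d; simpa using h a b c d)
  -- skew-symmetry in the last two slots
  have hB34 : ∀ a b c d : V, B a b c d = - B a b d c := by
    intro a b c d
    rw [hBpair, hBskew, hBpair d c a b]
  have hD34 : ∀ P a b c d : V, D P a b c d = - D P a b d c := by
    intro P a b c d
    rw [hDpair, hDskew, hDpair P d c a b]
  -- key identity for β - β'
  have key1 : ∀ X x y u v : V,
      (β x - β' x) * B X y u v + (β y - β' y) * B X x u v = 0 := by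
    intro X x y u v
    have h := hDskew X x y u v
    rw [hdec, hdec] at h
    rw [hBskew y x u v, hBskew x X u v, hBskew y X u v, hBskew y x X v,
      hBskew y x u X] at h
    linear_combination h
  -- key identity for γ - γ'
  have key2 : ∀ P U W u v : V,
      (γ u - γ' u) * B U W P v + (γ v - γ' v) * B U W P u = 0 := by
    intro P U W u v
    have h := hD34 P U W u v
    rw [hdec, hdec] at h
    rw [hB34 U W v u, hB34 P W v u, hB34 U P v u, hB34 U W v P,
      hB34 U W u P] at h
    linear_combination h
  constructor
  · ext x
    have hb : β b - β' b = 0 := by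
      have h := key1 a b b c d
      have : (β b - β' b) * B a b c d = 0 := by linarith
      rcases mul_eq_zero.mp this with h' | h'
      · exact h'
      · exact absurd h' habcd
    have h := key1 a x b c d
    rw [hb] at h
    have : (β x - β' x) * B a b c d = 0 := by linarith
    rcases mul_eq_zero.mp this with h' | h'
    · linarith
    · exact absurd h' habcd
  · ext x
    have hd : γ d - γ' d = 0 := by
      have h := key2 c a b d d
      have : (γ d - γ' d) * B a b c d = 0 := by linarith
      rcases mul_eq_zero.mp this with h' | h'
      · exact h'
      · exact absurd h' habcd
    have h := key2 c a b x d
    rw [hd] at h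
    have : (γ x - γ' x) * B a b c d = 0 := by linarith
    rcases mul_eq_zero.mp this with h' | h'
    · linarith
    · exact absurd h' habcd
end

section
/- Let V be a real vector space, B a nonzero generalized curvature tensor on V, and D : V⁵ → ℝ a 5-linear map such that for every fixed X ∈ V the 4-linear map (X₁,X₂,X₃,X₄) ↦ D(X,X₁,X₂,X₃,X₄) is a generalized curvature tensor on V. Suppose there are 1-forms α, β, β̄, γ, γ̄ on V such that D(X,X₁,X₂,X₃,X₄) = α(X)B(X₁,X₂,X₃,X₄) + β(X₁)B(X,X₂,X₃,X₄) + β̄(X₂)B(X₁,X,X₃,X₄) + γ(X₃)B(X₁,X₂,X,X₄) + γ̄(X₄)B(X₁,X₂,X₃,X) for all arguments. Then, with σ = (β+γ)/2, one also has D(X,X₁,X₂,X₃,X₄) = α(X)B(X₁,X₂,X₃,X₄) + σ(X₁)B(X,X₂,X₃,X₄) + σ(X₂)B(X₁,X,X₃,X₄) + σ(X₃)B(X₁,X₂,X,X₄) + σ(X₄)B(X₁,X₂,X₃,X) for all X, X₁, X₂, X₃, X₄ ∈ V. -/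
/-- Key abstract lemma: if `τ a * G b w + τ b * G a w = 0` always and `G` is not
identically zero, then `τ` vanishes. -/
lemma aux_key_stmt11 {V W : Type*} (τ : V → ℝ) (G : V → W → ℝ)
    (h : ∀ a b w, τ a * G b w + τ b * G a w = 0)
    (hG : ∃ b w, G b w ≠ 0) : ∀ a, τ a = 0 := by
  intro a
  by_contra ha
  obtain ⟨b, w, hbw⟩ := hG
  have h1 : ∀ w, G a w = 0 := by
    intro w
    have h0 := h a a w
    have h2 : τ a * (2 * G a w) = 0 := by ring_nf; ring_nf at h0; linarith
    rcases mul_eq_zero.mp h2 with h3 | h3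
    · exact absurd h3 ha
    · linarith
  have h0 := h b a w
  rw [h1 w] at h0
  have h2 : τ a * G b w = 0 := by linarith
  rcases mul_eq_zero.mp h2 with h3 | h3
  · exact absurd h3 ha
  · exact hbw h3

/-- Ewert-Krzemieniewski's reduction (Section 3): a weakly `B`-symmetric solution
`(α, β, β̄, γ, γ̄)`, for a nonzero generalized curvature tensor `B`, yields the
solution `(α, σ, σ, σ, σ)` with `σ = (β+γ)/2`. -/
theorem stmt_11 {V : Type*} [AddCommGroup V] [Module ℝ V]
    (B : V →ₗ[ℝ] V →ₗ[ℝ] V →ₗ[ℝ] V →ₗ[ℝ] ℝ) (hB : B ≠ 0)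
    (hBskew : ∀ X₁ X₂ X₃ X₄ : V, B X₁ X₂ X₃ X₄ = - B X₂ X₁ X₃ X₄)
    (hBpair : ∀ X₁ X₂ X₃ X₄ : V, B X₁ X₂ X₃ X₄ = B X₃ X₄ X₁ X₂)
    (hBbianchi : ∀ X₁ X₂ X₃ X₄ : V,
      B X₁ X₂ X₃ X₄ + B X₂ X₃ X₁ X₄ + B X₃ X₁ X₂ X₄ = 0)
    (D : V →ₗ[ℝ] V →ₗ[ℝ] V →ₗ[ℝ] V →ₗ[ℝ] V →ₗ[ℝ] ℝ)
    (hDskew : ∀ X X₁ X₂ X₃ X₄ : V, D X X₁ X₂ X₃ X₄ = - D X X₂ X₁ X₃ X₄)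
    (hDpair : ∀ X X₁ X₂ X₃ X₄ : V, D X X₁ X₂ X₃ X₄ = D X X₃ X₄ X₁ X₂)
    (hDbianchi : ∀ X X₁ X₂ X₃ X₄ : V,
      D X X₁ X₂ X₃ X₄ + D X X₂ X₃ X₁ X₄ + D X X₃ X₁ X₂ X₄ = 0)
    (α β β' γ γ' : V →ₗ[ℝ] ℝ)
    (hdec : ∀ X X₁ X₂ X₃ X₄ : V,
      D X X₁ X₂ X₃ X₄ = α X * B X₁ X₂ X₃ X₄
        + β X₁ * B X X₂ X₃ X₄ + β' X₂ * B X₁ X X₃ X₄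
        + γ X₃ * B X₁ X₂ X X₄ + γ' X₄ * B X₁ X₂ X₃ X) :
    ∀ X X₁ X₂ X₃ X₄ : V,
      D X X₁ X₂ X₃ X₄ = α X * B X₁ X₂ X₃ X₄
        + ((β X₁ + γ X₁) / 2) * B X X₂ X₃ X₄
        + ((β X₂ + γ X₂) / 2) * B X₁ X X₃ X₄
        + ((β X₃ + γ X₃) / 2) * B X₁ X₂ X X₄
        + ((β X₄ + γ X₄) / 2) * B X₁ X₂ X₃ X := by
  -- B is not identically zero pointwise
  have hBex : ∃ x y z w : V, B x y z w ≠ 0 := by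
    by_contra h
    push_neg at h
    apply hB
    ext x y z w
    simpa using h x y z w
  obtain ⟨x₀, y₀, z₀, w₀, hB0⟩ := hBex
  -- B is also skew in the last two slots
  have hBskew34 : ∀ a b c d : V, B a b c d = - B a b d c := by
    intro a b c d
    have h1 := hBpair a b c d
    have h2 := hBskew c d a b
    have h3 := hBpair d c a b
    linarith
  -- D is skew in the last two slots
  have hDskew34 : ∀ X a b c d : V, D X a b c d = - D X a b d c := by
    intro X a b c d
    have h1 := hDpair X a b c d
    have h2 := hDskew X c d a b
    have h3 := hDpair X d c a b
    linarith
  -- Step 1: β = β'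
  have hββ' : ∀ a, β a - β' a = 0 := by
    apply aux_key_stmt11 (fun a => β a - β' a)
      (fun a (p : V × V × V) => B p.1 a p.2.1 p.2.2)
    · rintro a b ⟨X, Y, Z⟩
      simp only
      have e := hDskew X a b Y Z
      rw [hdec X a b Y Z, hdec X b a Y Z] at e
      have u1 : B b a Y Z = - B a b Y Z := hBskew b a Y Z
      have u2 : B X a Y Z = - B a X Y Z := hBskew X a Y Z
      have u3 : B b X Y Z = - B X b Y Z := hBskew b X Y Z
      have u4 : B b a X Z = - B a b X Z := hBskew b a X Z
      have u5 : B b a Y X = - B a b Y X := hBskew b a Y X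
      linear_combination e - α X * u1 - γ Y * u4 - γ' Z * u5 - β' b * u2 - β' a * u3
    · exact ⟨y₀, (x₀, z₀, w₀), hB0⟩
  -- Step 2: γ = γ'
  have hγγ' : ∀ a, γ a - γ' a = 0 := by
    apply aux_key_stmt11 (fun a => γ a - γ' a)
      (fun a (p : V × V × V) => B p.1 p.2.1 p.2.2 a)
    · rintro a b ⟨X₁, X₂, X⟩
      simp only
      have e := hDskew34 X X₁ X₂ a b
      rw [hdec X X₁ X₂ a b, hdec X X₁ X₂ b a] at e
      have u1 : B X₁ X₂ b a = - B X₁ X₂ a b := hBskew34 X₁ X₂ b a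
      have u2 : B X X₂ b a = - B X X₂ a b := hBskew34 X X₂ b a
      have u3 : B X₁ X b a = - B X₁ X a b := hBskew34 X₁ X b a
      have u4 : B X₁ X₂ a X = - B X₁ X₂ X a := hBskew34 X₁ X₂ a X
      have u5 : B X₁ X₂ b X = - B X₁ X₂ X b := hBskew34 X₁ X₂ b X
      linear_combination e - α X * u1 - β X₁ * u2 - β' X₂ * u3 - γ' b * u4 - γ' a * u5
    · exact ⟨w₀, (x₀, y₀, z₀), hB0⟩
  -- Step 3: pair-symmetry relation
  have hrel : ∀ X X₁ X₂ X₃ X₄ : V,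
      (β X₁ - γ X₁) * B X X₂ X₃ X₄ + (β' X₂ - γ' X₂) * B X₁ X X₃ X₄
      - (β X₃ - γ X₃) * B X₁ X₂ X X₄ - (β' X₄ - γ' X₄) * B X₁ X₂ X₃ X = 0 := by
    intro X X₁ X₂ X₃ X₄
    have e := hDpair X X₁ X₂ X₃ X₄
    rw [hdec X X₁ X₂ X₃ X₄, hdec X X₃ X₄ X₁ X₂] at e
    have p1 : B X₃ X₄ X₁ X₂ = B X₁ X₂ X₃ X₄ := (hBpair X₁ X₂ X₃ X₄).symm
    have p2 : B X X₄ X₁ X₂ = B X₁ X₂ X X₄ := (hBpair X₁ X₂ X X₄).symm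
    have p3 : B X₃ X X₁ X₂ = B X₁ X₂ X₃ X := (hBpair X₁ X₂ X₃ X).symm
    have p4 : B X₃ X₄ X X₂ = B X X₂ X₃ X₄ := (hBpair X X₂ X₃ X₄).symm
    have p5 : B X₃ X₄ X₁ X = B X₁ X X₃ X₄ := (hBpair X₁ X X₃ X₄).symm
    linear_combination e + α X * p1 + β X₃ * p2 + β' X₄ * p3 + γ X₁ * p4 + γ' X₂ * p5
  -- Conclusion
  intro X X₁ X₂ X₃ X₄
  have e := hdec X X₁ X₂ X₃ X₄
  have r := hrel X X₁ X₂ X₃ X₄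
  have b2 := hββ' X₂
  have b4 := hββ' X₄
  have g2 := hγγ' X₂
  have g4 := hγγ' X₄
  linear_combination e + (1/2 : ℝ) * r - (B X₁ X X₃ X₄ / 2) * b2
    - (B X₁ X X₃ X₄ / 2) * g2 - (B X₁ X₂ X₃ X / 2) * b4 - (B X₁ X₂ X₃ X / 2) * g4
end

section
/- Let V be a real vector space, B a generalized curvature tensor on V, and α, σ 1-forms on V. Define the 5-linear map D by D(X,X₁,X₂,X₃,X₄) = α(X)B(X₁,X₂,X₃,X₄) + σ(X₁)B(X,X₂,X₃,X₄) + σ(X₂)B(X₁,X,X₃,X₄) + σ(X₃)B(X₁,X₂,X,X₄) + σ(X₄)B(X₁,X₂,X₃,X), and suppose D satisfies the second Bianchi identity D(X,X₁,X₂,X₃,X₄) + D(X₁,X₂,X,X₃,X₄) + D(X₂,X,X₁,X₃,X₄) = 0 for all X, X₁, X₂, X₃, X₄ ∈ V. Then, with ε = (α+2σ)/4, one has D(X,X₁,X₂,X₃,X₄) = 2ε(X)B(X₁,X₂,X₃,X₄) + ε(X₁)B(X,X₂,X₃,X₄) + ε(X₂)B(X₁,X,X₃,X₄) + ε(X₃)B(X₁,X₂,X,X₄)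 + ε(X₄)B(X₁,X₂,X₃,X) for all X, X₁, X₂, X₃, X₄ ∈ V. -/
/-- Section 3 (proper generalized curvature tensor): if `D`, given by a weakly
`B`-symmetric solution `(α, σ, σ, σ, σ)`, satisfies the second Bianchi identity,
then the Chaki-form solution `(2ε, ε, ε, ε, ε)` with `ε = (α+2σ)/4` also holds. -/
theorem stmt_12 {V : Type*} [AddCommGroup V] [Module ℝ V]
    (B : V →ₗ[ℝ] V →ₗ[ℝ] V →ₗ[ℝ] V →ₗ[ℝ] ℝ)
    (hBskew : ∀ X₁ X₂ X₃ X₄ : V, B X₁ X₂ X₃ X₄ = - B X₂ X₁ X₃ X₄)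
    (hBpair : ∀ X₁ X₂ X₃ X₄ : V, B X₁ X₂ X₃ X₄ = B X₃ X₄ X₁ X₂)
    (hBbianchi : ∀ X₁ X₂ X₃ X₄ : V,
      B X₁ X₂ X₃ X₄ + B X₂ X₃ X₁ X₄ + B X₃ X₁ X₂ X₄ = 0)
    (α σ : V →ₗ[ℝ] ℝ)
    (D : V → V → V → V → V → ℝ)
    (hdef : ∀ X X₁ X₂ X₃ X₄ : V,
      D X X₁ X₂ X₃ X₄ = α X * B X₁ X₂ X₃ X₄
        + σ X₁ * B X X₂ X₃ X₄ + σ X₂ * B X₁ X X₃ X₄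
        + σ X₃ * B X₁ X₂ X X₄ + σ X₄ * B X₁ X₂ X₃ X)
    (hbianchi2 : ∀ X X₁ X₂ X₃ X₄ : V,
      D X X₁ X₂ X₃ X₄ + D X₁ X₂ X X₃ X₄ + D X₂ X X₁ X₃ X₄ = 0) :
    ∀ X X₁ X₂ X₃ X₄ : V,
      D X X₁ X₂ X₃ X₄ = 2 * ((α X + 2 * σ X) / 4) * B X₁ X₂ X₃ X₄
        + ((α X₁ + 2 * σ X₁) / 4) * B X X₂ X₃ X₄
        + ((α X₂ + 2 * σ X₂) / 4) * B X₁ X X₃ X₄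
        + ((α X₃ + 2 * σ X₃) / 4) * B X₁ X₂ X X₄
        + ((α X₄ + 2 * σ X₄) / 4) * B X₁ X₂ X₃ X := by
  -- skew symmetry in the last pair
  have hskew34 : ∀ X₁ X₂ X₃ X₄ : V, B X₁ X₂ X₃ X₄ = - B X₁ X₂ X₄ X₃ := by
    intro X₁ X₂ X₃ X₄
    rw [hBpair X₁ X₂ X₃ X₄, hBskew X₃ X₄ X₁ X₂, hBpair X₄ X₃ X₁ X₂]
  -- the key consequence of the second Bianchi identity
  have hstar : ∀ X X₁ X₂ X₃ X₄ : V,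
      (α X - 2 * σ X) * B X₁ X₂ X₃ X₄ - (α X₁ - 2 * σ X₁) * B X X₂ X₃ X₄
        - (α X₂ - 2 * σ X₂) * B X₁ X X₃ X₄ = 0 := by
    intro X X₁ X₂ X₃ X₄
    have h := hbianchi2 X X₁ X₂ X₃ X₄
    rw [hdef, hdef, hdef] at h
    have h1 := hBskew X₂ X X₃ X₄
    have h2 := hBskew X X₁ X₃ X₄
    have h3 := hBskew X₂ X₁ X₃ X₄
    have h4 := hBbianchi X₁ X₂ X X₄
    -- Bianchi in slots 1,2,4 with X₃ fixed in slot 3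
    have h5 : B X₁ X₂ X₃ X + B X₂ X X₃ X₁ + B X X₁ X₃ X₂ = 0 := by
      have := hBbianchi X₁ X₂ X X₃
      linear_combination -this + hskew34 X₁ X₂ X₃ X + hskew34 X₂ X X₃ X₁
        + hskew34 X X₁ X₃ X₂
    linear_combination h - α X₁ * h1 - α X₂ * h2 - 2 * σ X * h3
      - σ X₃ * h4 - σ X₄ * h5
  intro X X₁ X₂ X₃ X₄
  have hA := hstar X X₁ X₂ X₃ X₄
  have hB2 := hstar X X₃ X₄ X₁ X₂
  have p1 := hBpair X X₄ X₁ X₂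
  have p2 := hBpair X₃ X X₁ X₂
  have p3 := hBpair X₃ X₄ X₁ X₂
  rw [hdef]
  linear_combination (1/4) * hA + (1/4) * hB2
    - (1/4) * (α X - 2 * σ X) * p3
    + (1/4) * (α X₃ - 2 * σ X₃) * p1
    + (1/4) * (α X₄ - 2 * σ X₄) * p2
end

section
/- Let V be a real vector space, B a generalized curvature tensor on V, and α, β, γ 1-forms on V. Define the 5-linear map D by D(X,X₁,X₂,X₃,X₄) = α(X)B(X₁,X₂,X₃,X₄) + β(X₁)B(X,X₂,X₃,X₄) + β(X₂)B(X₁,X,X₃,X₄) + γ(X₃)B(X₁,X₂,X,X₄) + γ(X₄)B(X₁,X₂,X₃,X). Then for all X, X₁, X₂, X₃, X₄ ∈ V: D(X,X₁,X₂,X₃,X₄) + D(X₁,X₂,X,X₃,X₄) + D(X₂,X,X₁,X₃,X₄) = (α−2β)(X)·B(X₁,X₂,X₃,X₄) + (α−2β)(X₁)·B(X₂,X,X₃,X₄) + (α−2β)(X₂)·B(X,X₁,X₃,X₄). -/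
/-- Section 3 (recurrence of the curvature 2-form): for `D` given by a weakly
`B`-symmetric solution `(α, β, β, γ, γ)`, the cyclic sum of `D` in its first three
arguments equals the corresponding cyclic expression in `B` with 1-form `α − 2β`. -/
theorem stmt_13 {V : Type*} [AddCommGroup V] [Module ℝ V]
    (B : V →ₗ[ℝ] V →ₗ[ℝ] V →ₗ[ℝ] V →ₗ[ℝ] ℝ)
    (hBskew : ∀ X₁ X₂ X₃ X₄ : V, B X₁ X₂ X₃ X₄ = - B X₂ X₁ X₃ X₄)
    (hBpair : ∀ X₁ X₂ X₃ X₄ : V, B X₁ X₂ X₃ X₄ = B X₃ X₄ X₁ X₂)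
    (hBbianchi : ∀ X₁ X₂ X₃ X₄ : V,
      B X₁ X₂ X₃ X₄ + B X₂ X₃ X₁ X₄ + B X₃ X₁ X₂ X₄ = 0)
    (α β γ : V →ₗ[ℝ] ℝ)
    (D : V → V → V → V → V → ℝ)
    (hdef : ∀ X X₁ X₂ X₃ X₄ : V,
      D X X₁ X₂ X₃ X₄ = α X * B X₁ X₂ X₃ X₄
        + β X₁ * B X X₂ X₃ X₄ + β X₂ * B X₁ X X₃ X₄
        + γ X₃ * B X₁ X₂ X X₄ + γ X₄ * B X₁ X₂ X₃ X) :
    ∀ X X₁ X₂ X₃ X₄ : V,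
      D X X₁ X₂ X₃ X₄ + D X₁ X₂ X X₃ X₄ + D X₂ X X₁ X₃ X₄
        = (α - 2 • β) X * B X₁ X₂ X₃ X₄
          + (α - 2 • β) X₁ * B X₂ X X₃ X₄
          + (α - 2 • β) X₂ * B X X₁ X₃ X₄ := by
  intro X X₁ X₂ X₃ X₄
  have hlast : ∀ a b c d : V, B a b c d = - B a b d c := fun a b c d => by
    rw [hBpair, hBskew, hBpair]
  simp only [hdef, LinearMap.sub_apply, LinearMap.smul_apply, smul_eq_mul]
  linear_combination γ X₃ * hBbianchi X₁ X₂ X X₄ - γ X₄ * hBbianchi X₁ X₂ X X₃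
    + γ X₄ * (hlast X₁ X₂ X₃ X + hlast X₂ X X₃ X₁ + hlast X X₁ X₃ X₂)
    + 2 * β X * hBskew X₂ X₁ X₃ X₄ + 2 * β X₁ * hBskew X X₂ X₃ X₄
    + 2 * β X₂ * hBskew X₁ X X₃ X₄
end

section
/- Let V be a real vector space, B a generalized curvature tensor on V, and θ a 1-form on V such that θ(X)B(X₁,X₂,X₃,X₄) + θ(X₁)B(X₂,X,X₃,X₄) + θ(X₂)B(X,X₁,X₃,X₄) = 0 for all X, X₁, X₂, X₃, X₄ ∈ V. Then 2θ(X)B(X₁,X₂,X₃,X₄) = θ(X₁)B(X,X₂,X₃,X₄) + θ(X₂)B(X₁,X,X₃,X₄) + θ(X₃)B(X₁,X₂,X,X₄) + θ(X₄)B(X₁,X₂,X₃,X) for all X, X₁, X₂, X₃, X₄ ∈ V. -/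
/-- Section 3 (key algebraic step): if the cyclic expression
`θ(X)B(X₁,X₂,·,·) + θ(X₁)B(X₂,X,·,·) + θ(X₂)B(X,X₁,·,·)` vanishes for a generalized
curvature tensor `B`, then
`2θ(X)B(X₁,X₂,X₃,X₄) = θ(X₁)B(X,X₂,X₃,X₄) + θ(X₂)B(X₁,X,X₃,X₄)
  + θ(X₃)B(X₁,X₂,X,X₄) + θ(X₄)B(X₁,X₂,X₃,X)`. -/
theorem stmt_15 {V : Type*} [AddCommGroup V] [Module ℝ V]
    (B : V →ₗ[ℝ] V →ₗ[ℝ] V →ₗ[ℝ] V →ₗ[ℝ] ℝ)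
    (hBskew : ∀ X₁ X₂ X₃ X₄ : V, B X₁ X₂ X₃ X₄ = - B X₂ X₁ X₃ X₄)
    (hBpair : ∀ X₁ X₂ X₃ X₄ : V, B X₁ X₂ X₃ X₄ = B X₃ X₄ X₁ X₂)
    (hBbianchi : ∀ X₁ X₂ X₃ X₄ : V,
      B X₁ X₂ X₃ X₄ + B X₂ X₃ X₁ X₄ + B X₃ X₁ X₂ X₄ = 0)
    (θ : V →ₗ[ℝ] ℝ)
    (h : ∀ X X₁ X₂ X₃ X₄ : V,
      θ X * B X₁ X₂ X₃ X₄ + θ X₁ * B X₂ X X₃ X₄ + θ X₂ * B X X₁ X₃ X₄ = 0) :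
    ∀ X X₁ X₂ X₃ X₄ : V,
      2 * θ X * B X₁ X₂ X₃ X₄
        = θ X₁ * B X X₂ X₃ X₄ + θ X₂ * B X₁ X X₃ X₄
          + θ X₃ * B X₁ X₂ X X₄ + θ X₄ * B X₁ X₂ X₃ X := by
  intro X X₁ X₂ X₃ X₄
  have h1 := h X X₁ X₂ X₃ X₄
  have h2 := h X X₃ X₄ X₁ X₂
  rw [hBskew X₂ X X₃ X₄, hBskew X X₁ X₃ X₄] at h1
  rw [hBpair X₃ X₄ X₁ X₂, hBpair X₄ X X₁ X₂, hBpair X X₃ X₁ X₂,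
    hBskew X₁ X₂ X₄ X, hBpair X₂ X₁ X₄ X, hBskew X₄ X X₂ X₁, hBpair X X₄ X₂ X₁, hBskew X₂ X₁ X X₄,
    show B X₁ X₂ X X₃ = - B X₁ X₂ X₃ X from by
      rw [hBpair X₁ X₂ X X₃, hBskew X X₃ X₁ X₂, hBpair X₃ X X₁ X₂]] at h2
  linarith
end
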